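/- arXiv:1311.4188 — 5 statements merged into one kernel-verified Lean document; each statement's English description precedes it below -/
import Mathlib

section
/- Let $k_0, w > 0$ and $\xi \in \mathbb{C}$. Suppose $u(x) = A e^{i k_0 \mu x} + B e^{-i k_0 \mu x}$ with $\mu \neq 0$, $(A,B) \neq (0,0)$, satisfies the boundary conditions $u'(-w/2) + i k_0 \xi u(-w/2) = 0$ and $u'(w/2) - i k_0 \xi u(w/2) = 0$. Then $B = \sigma A$ with $\sigma \in \{1,-1\}$ and $e^{i \mu k_0 w} = \sigma \frac{\mu + \xi}{\mu - \xi}$ (in particular $\mu \neq \xi$). -/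
/-!
Write `u x = A e^{cx} + B e^{-cx}` with `c = i k₀ μ` and `z = e^{i μ k₀ w}`. After dividing by
`i k₀`, the two impedance conditions become the swapped pair
`A (μ + ξ) = B z (μ - ξ)` and `A z (μ - ξ) = B (μ + ξ)`. Multiplying them gives `A² = B²`, so
`B = ±A`, and then either relation yields `z = ±(μ + ξ) / (μ - ξ)`; the degenerate cases
`μ = ξ`, `μ = -ξ` and `A = 0` all force `A = B = 0`, since `(μ + ξ) + (μ - ξ) = 2μ ≠ 0`.
-/

open Complex Real

theorem exists_sign_of_swapped_relations {K : Type*} [Field K] {p q z A B : K}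
    (hpq : p + q ≠ 0) (hz : z ≠ 0) (hAB : ¬(A = 0 ∧ B = 0))
    (h₁ : A * p = B * z * q) (h₂ : A * z * q = B * p) :
    ∃ σ : K, (σ = 1 ∨ σ = -1) ∧ B = σ * A ∧ q ≠ 0 ∧ z = σ * p / q := by
  have hq : q ≠ 0 := by
    rintro rfl
    rw [add_zero] at hpq
    exact hAB ⟨by simpa [hpq] using h₁, by simpa [hpq] using h₂.symm⟩
  have hp : p ≠ 0 := by
    rintro rfl
    rw [zero_add] at hpq
    exact hAB ⟨by simpa [hz, hpq] using h₂, by simpa [hz, hpq] using h₁.symm⟩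
  have hsq : B ^ 2 = A ^ 2 :=
    mul_right_cancel₀ (mul_ne_zero (mul_ne_zero hp hz) hq)
      (by linear_combination -(A * z * q) * h₁ - (B * z * q) * h₂)
  obtain ⟨σ, hσ, hB⟩ : ∃ σ : K, (σ = 1 ∨ σ = -1) ∧ B = σ * A := by
    rcases sq_eq_sq_iff_eq_or_eq_neg.1 hsq with h | h
    exacts [⟨1, .inl rfl, by rw [h, one_mul]⟩, ⟨-1, .inr rfl, by rw [h, neg_one_mul]⟩]
  have hA : A ≠ 0 := by
    rintro rfl
    exact hAB ⟨rfl, by simpa using hB⟩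
  refine ⟨σ, hσ, hB, hq, ?_⟩
  rw [eq_div_iff hq]
  exact mul_left_cancel₀ hA (by linear_combination h₂ + p * hB)

theorem hasDerivAt_exp_add_exp_neg (A B c : ℂ) (x : ℝ) :
    HasDerivAt (fun y : ℝ => A * exp (c * y) + B * exp (-(c * y)))
      (c * (A * exp (c * x) - B * exp (-(c * x)))) x := by
  have hlin : HasDerivAt (fun y : ℝ => c * (y : ℂ)) c x := by
    simpa using (hasDerivAt_id x).ofReal_comp.const_mul c
  have hneg : HasDerivAt (fun y : ℝ => -(c * (y : ℂ))) (-c) x := hlin.neg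
  exact ((hlin.cexp.const_mul A).add (hneg.cexp.const_mul B)).congr_deriv (by ring)

theorem swapped_relations_of_impedance_bc (k0 w : ℝ) (hk0 : k0 ≠ 0) (ξ μ A B : ℂ) (u : ℝ → ℂ)
    (hu : ∀ x : ℝ, u x = A * exp (I * k0 * μ * x) + B * exp (-(I * k0 * μ * x)))
    (hbc1 : deriv u (-(w / 2)) + I * k0 * ξ * u (-(w / 2)) = 0)
    (hbc2 : deriv u (w / 2) - I * k0 * ξ * u (w / 2) = 0) :
    A * (μ + ξ) = B * exp (I * μ * k0 * w) * (μ - ξ) ∧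
      A * exp (I * μ * k0 * w) * (μ - ξ) = B * (μ + ξ) := by
  obtain rfl : u = _ := funext hu
  set c : ℂ := I * k0 * μ
  beta_reduce at hbc1 hbc2
  rw [(hasDerivAt_exp_add_exp_neg A B c _).deriv] at hbc1 hbc2
  set E : ℂ := exp (c * ↑(w / 2))
  have hneg : c * ↑(-(w / 2)) = -(c * ↑(w / 2)) := by push_cast; ring
  rw [hneg, neg_neg] at hbc1
  have hEinv : E * exp (-(c * ↑(w / 2))) = 1 := by
    rw [← Complex.exp_add, add_neg_cancel, Complex.exp_zero]
  have hz : exp (I * μ * k0 * w) = E ^ 2 := by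
    rw [sq, ← Complex.exp_add]
    congr 1
    push_cast
    ring
  have hIk0 : I * (k0 : ℂ) ≠ 0 := mul_ne_zero I_ne_zero (ofReal_ne_zero.2 hk0)
  rw [hz]
  constructor
  · exact mul_left_cancel₀ hIk0
      (by linear_combination E * hbc1 - I * k0 * A * (μ + ξ) * hEinv)
  · exact mul_left_cancel₀ hIk0
      (by linear_combination E * hbc2 + I * k0 * B * (μ + ξ) * hEinv)

theorem stmt_0_general (k0 w : ℝ) (hk0 : 0 < k0)
    (ξ μ A B : ℂ) (hμ : μ ≠ 0) (hAB : ¬ (A = 0 ∧ B = 0))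
    (u : ℝ → ℂ)
    (hu : ∀ x : ℝ, u x = A * Complex.exp (Complex.I * k0 * μ * x) +
      B * Complex.exp (-(Complex.I * k0 * μ * x)))
    (hbc1 : deriv u (-(w/2)) + Complex.I * k0 * ξ * u (-(w/2)) = 0)
    (hbc2 : deriv u (w/2) - Complex.I * k0 * ξ * u (w/2) = 0) :
    ∃ σ : ℂ, (σ = 1 ∨ σ = -1) ∧ B = σ * A ∧ μ ≠ ξ ∧
      Complex.exp (Complex.I * μ * k0 * w) = σ * (μ + ξ) / (μ - ξ) := by
  obtain ⟨h₁, h₂⟩ := swapped_relations_of_impedance_bc k0 w hk0.ne' ξ μ A B u hu hbc1 hbc2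
  have hsum : (μ + ξ) + (μ - ξ) ≠ 0 := by
    rw [add_add_sub_cancel, ← two_mul]
    exact mul_ne_zero two_ne_zero hμ
  obtain ⟨σ, hσ, hB, hne, hexp⟩ :=
    exists_sign_of_swapped_relations hsum (exp_ne_zero _) hAB h₁ h₂
  exact ⟨σ, hσ, hB, sub_ne_zero.1 hne, hexp⟩

theorem stmt_0 (k0 w : ℝ) (hk0 : 0 < k0) (hw : 0 < w)
    (ξ μ A B : ℂ) (hμ : μ ≠ 0) (hAB : ¬ (A = 0 ∧ B = 0))
    (u : ℝ → ℂ)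
    (hu : ∀ x : ℝ, u x = A * Complex.exp (Complex.I * k0 * μ * x) +
      B * Complex.exp (-(Complex.I * k0 * μ * x)))
    (hbc1 : deriv u (-(w/2)) + Complex.I * k0 * ξ * u (-(w/2)) = 0)
    (hbc2 : deriv u (w/2) - Complex.I * k0 * ξ * u (w/2) = 0) :
    ∃ σ : ℂ, (σ = 1 ∨ σ = -1) ∧ B = σ * A ∧ μ ≠ ξ ∧
      Complex.exp (Complex.I * μ * k0 * w) = σ * (μ + ξ) / (μ - ξ) :=
  stmt_0_general k0 w hk0 ξ μ A B hμ hAB u hu hbc1 hbc2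
end

section
/- As $\chi \to 0$ in $\mathbb{C}$, the solution $\alpha_0$ of $\alpha_0 \tan(\alpha_0/2) = -i\chi^2$ with $\alpha_0 \sim (1-i)\chi$ admits the expansion $\alpha_0 = (1-i)\left(\chi + \frac{i}{12}\chi^3\right) + O(\chi^5)$. -/
open Complex Filter Asymptotics Topology

/-!
Put `a = (1 - i)χ`, so that `a² = -2iχ²`, and `β = α₀ - a = o(χ)`. The expansion
`α tan (α/2) = α²/2 + α⁴/24 + O(α⁶)` turns the equation into `α₀² + α₀⁴/12 + 2iχ² = O(χ⁶)`, that is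
`β (2a + β) = -α₀⁴/12 + O(χ⁶)`. As `β = o(χ)`, the factor `2a + β` has exact order `χ`, so first
`β = O(χ³)`. Feeding this back, `α₀⁴ = a⁴ + O(χ⁶) = -4χ⁴ + O(χ⁶)` and `β² = O(χ⁶)`, hence
`2aβ = χ⁴/3 + O(χ⁶)`, i.e. `β = (1 + i)χ³/12 + O(χ⁵)`.
-/

namespace Complex

theorem sin_sub_cubic_isBigO : (fun z : ℂ => sin z - (z - z ^ 3 / 6)) =O[𝓝 0] (· ^ 5) := by
  refine isBigO_iff.2 ⟨1 / 100, ?_⟩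
  filter_upwards [Metric.closedBall_mem_nhds (0 : ℂ) one_pos] with z hz
  simpa [div_eq_inv_mul, mul_comm] using sin_bound (by simpa using hz)

theorem cos_sub_quadratic_isBigO : (fun z : ℂ => cos z - (1 - z ^ 2 / 2)) =O[𝓝 0] (· ^ 4) := by
  refine isBigO_iff.2 ⟨5 / 96, ?_⟩
  filter_upwards [Metric.closedBall_mem_nhds (0 : ℂ) one_pos] with z hz
  simpa [mul_comm] using cos_bound (by simpa using hz)

theorem tan_sub_cubic_isBigO : (fun z : ℂ => tan z - (z + z ^ 3 / 3)) =O[𝓝 0] (· ^ 5) := by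
  have hpoly : (fun z : ℂ => z + z ^ 3 / 3) =O[𝓝 0] fun z => z := by
    have hbdd := ((by fun_prop : Continuous fun z : ℂ => 1 + z ^ 2 / 3).tendsto 0).isBigO_one ℂ
    exact ((isBigO_refl _ _).mul hbdd).congr (fun z => by ring) (fun z => mul_one z)
  have hnum : (fun z : ℂ => sin z - (z + z ^ 3 / 3) * cos z) =O[𝓝 0] (· ^ 5) := by
    have hprod : (fun z : ℂ => (z + z ^ 3 / 3) * (cos z - (1 - z ^ 2 / 2))) =O[𝓝 0] (· ^ 5) :=
      (hpoly.mul cos_sub_quadratic_isBigO).congr_right fun z => by ring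
    have h := (sin_sub_cubic_isBigO.sub hprod).add
      ((isBigO_refl (· ^ 5) (𝓝 (0 : ℂ))).const_mul_left (1 / 6))
    exact h.congr (fun z => by ring) (fun z => by ring)
  have hcos : (fun z => (cos z)⁻¹) =O[𝓝 0] (fun _ => (1 : ℂ)) :=
    ((continuous_cos.tendsto 0).inv₀ (by simp)).isBigO_one ℂ
  refine ((hnum.mul hcos).congr' ?_ (.of_eq (by simp))).trans (isBigO_refl _ _)
  filter_upwards [continuous_cos.continuousAt.eventually_ne (by simp : cos 0 ≠ 0)] with z hz
  rw [tan_eq_sin_div_cos]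
  field_simp

theorem mul_tan_half_sub_isBigO :
    (fun z : ℂ => z * tan (z / 2) - (z ^ 2 / 2 + z ^ 4 / 24)) =O[𝓝 0] (· ^ 6) := by
  have hhalf : Tendsto (fun z : ℂ => z / 2) (𝓝 0) (𝓝 0) := by
    simpa using (continuous_id.div_const (2 : ℂ)).tendsto 0
  have h := (isBigO_refl (fun z : ℂ => z) _).mul (tan_sub_cubic_isBigO.comp_tendsto hhalf)
  refine (h.congr (fun z => by simp only [Function.comp_apply]; ring) fun z => ?_).trans
    ((isBigO_refl _ _).const_mul_left (1 / 32))
  simp only [Function.comp_apply]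
  ring

end Complex

theorem Asymptotics.IsBigO.of_mul_left_of_eventually_ne {α 𝕜 : Type*} [NormedField 𝕜]
    {l : Filter α} {f g k : α → 𝕜} (hf : ∀ᶠ x in l, f x ≠ 0)
    (h : (fun x => f x * g x) =O[l] fun x => f x * k x) : g =O[l] k := by
  refine ((isBigO_refl (fun x => (f x)⁻¹) l).mul h).congr' ?_ ?_ <;>
    filter_upwards [hf] with _ hx <;> field_simp

theorem Asymptotics.IsLittleO.isBigO_of_sub_const_mul {α 𝕜 : Type*} [NormedField 𝕜]
    {l : Filter α} {f g : α → 𝕜} {c : 𝕜} (h : (fun x => f x - c * g x) =o[l] g) :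
    f =O[l] g :=
  (h.isBigO.add ((isBigO_refl g l).const_mul_left c)).congr_left fun _ => sub_add_cancel _ _

theorem isBigO_pow_of_mul_add_isBigO {β : ℂ → ℂ} (c : ℂ) (hc : c ≠ 0) (n : ℕ)
    (hβ : β =o[𝓝[≠] 0] fun z => z)
    (h : (fun z => β z * (c * z + β z)) =O[𝓝[≠] 0] (· ^ (n + 1))) :
    β =O[𝓝[≠] 0] (· ^ n) := by
  have hcz : (fun z : ℂ => z) =O[𝓝[≠] 0] fun z => c * z := isBigO_self_const_mul hc _ _
  have hz : (fun z : ℂ => z) =O[𝓝[≠] 0] fun z => c * z + β z :=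
    hcz.trans ((hβ.trans_isBigO hcz).right_isBigO_add.congr_right fun z => add_comm _ _)
  refine IsBigO.of_mul_left_of_eventually_ne (f := fun z => z) self_mem_nhdsWithin ?_
  exact (((isBigO_refl β _).mul hz).congr_left fun z => by ring).trans
    (h.congr_right fun z => pow_succ' z n)

theorem isBigO_sub_cubic_of_sq_add_quartic_isBigO {α : ℂ → ℂ}
    (hlead : (fun z => α z - (1 - I) * z) =o[𝓝[≠] 0] fun z => z)
    (hdisp : (fun z => α z ^ 2 + α z ^ 4 / 12 + 2 * I * z ^ 2) =O[𝓝[≠] 0] (· ^ 6)) :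
    (fun z => α z - (1 - I) * (z + I / 12 * z ^ 3)) =O[𝓝[≠] 0] (· ^ 5) := by
  set β := fun z => α z - (1 - I) * z
  have hc : (2 * (1 - I) : ℂ) ≠ 0 := by simp [Complex.ext_iff]
  have hα : α =O[𝓝[≠] 0] fun z => z := hlead.isBigO_of_sub_const_mul
  have hsq : (fun z => β z * (2 * (1 - I) * z + β z)) =O[𝓝[≠] 0] (· ^ 4) := by
    have h64 : (fun z : ℂ => z ^ 6) =O[𝓝[≠] 0] (· ^ 4) :=
      (isLittleO_pow_pow (by norm_num)).isBigO.mono nhdsWithin_le_nhds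
    refine ((hdisp.trans h64).sub ((hα.pow 4).const_mul_left (1 / 12))).congr_left fun z => ?_
    linear_combination z ^ 2 * I_sq
  have hβ : β =O[𝓝[≠] 0] (· ^ 3) := isBigO_pow_of_mul_add_isBigO _ hc 3 hlead hsq
  have hsum : (fun z => α z ^ 2 + ((1 - I) * z) ^ 2) =O[𝓝[≠] 0] (· ^ 2) :=
    (hα.pow 2).add (((isBigO_refl _ _).const_mul_left (1 - I)).pow 2 |>.congr_right fun z => rfl)
  have hquartic : (fun z => β z * (2 * (1 - I) * z + β z) * (α z ^ 2 + ((1 - I) * z) ^ 2))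
      =O[𝓝[≠] 0] (· ^ 6) := (hsq.mul hsum).congr_right fun z => by ring
  have h6 := (hdisp.sub (hquartic.const_mul_left (1 / 12))).sub
    ((hβ.pow 2).congr_right fun z => by ring)
  refine IsBigO.of_mul_left_of_eventually_ne (f := fun z => z) self_mem_nhdsWithin ?_
  -- with `a = (1 - i)z`, `a⁴ = -4z⁴` gives
  -- `2a (α - (1 - i)(z + iz³/12)) = (α² + α⁴/12 + 2iz²) - (α² - a²)(α² + a²)/12 - β²`
  refine ((isBigO_const_mul_left_iff hc).1 (h6.congr (fun z => ?_) fun z => ?_))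
  · linear_combination (z ^ 2 + z ^ 4 * ((I ^ 2 + 1) / 12 - I / 6)) * I_sq
  · ring

theorem stmt_3 (α₀ : ℂ → ℂ)
    (heq : ∀ᶠ χ in nhdsWithin (0 : ℂ) {0}ᶜ,
      α₀ χ * Complex.tan (α₀ χ / 2) = -Complex.I * χ ^ 2)
    (hlead : (fun χ : ℂ => α₀ χ - (1 - Complex.I) * χ)
        =o[nhdsWithin (0 : ℂ) {0}ᶜ] fun χ : ℂ => χ) :
    (fun χ : ℂ => α₀ χ - (1 - Complex.I) * (χ + Complex.I / 12 * χ ^ 3))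
      =O[nhdsWithin (0 : ℂ) {0}ᶜ] fun χ : ℂ => χ ^ 5 := by
  have hα : α₀ =O[𝓝[≠] 0] fun χ => χ := hlead.isBigO_of_sub_const_mul
  have hα_tendsto : Tendsto α₀ (𝓝[≠] 0) (𝓝 0) :=
    hα.trans_tendsto (tendsto_id.mono_left nhdsWithin_le_nhds)
  have htan := (mul_tan_half_sub_isBigO.comp_tendsto hα_tendsto).trans (hα.pow 6)
  refine isBigO_sub_cubic_of_sq_add_quartic_isBigO hlead
    ((htan.const_mul_left (-2)).congr' ?_ .rfl)
  filter_upwards [heq] with χ hχ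
  simp only [Function.comp_apply]
  linear_combination -2 * hχ
end

section
/- Fix $\tilde\xi \in \mathbb{C}$ in a bounded set. For $n \in \mathbb{N}^*$, the solution $\alpha_n$ of $(n\pi + \alpha_n)\tan(\alpha_n/2) = -i\tilde\xi$ with $\alpha_n \to 0$ as $n \to \infty$ satisfies $\alpha_n = -\frac{2i}{\pi}\frac{\tilde\xi}{n} + O(1/n^2)$ as $n \to \infty$. -/
/-!
Write `β n = α n / 2`. The equation gives `tan β n = -i ξ / (nπ + α n) = O(1/n)`, and since
`tan z = z + O(z²)` at `0` while `β n → 0`, also `β n = O(1/n)`. Then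
`α n + 2iξ/(πn) = -2 (tan β n - β n) + 2iξ α n / ((nπ + α n) nπ)`,
and both terms are `O(1/n²)`.
-/

open Complex Filter Asymptotics Topology

theorem AnalyticAt.isBigO_sub_sub_smul_deriv {𝕜 E : Type*} [NontriviallyNormedField 𝕜]
    [NormedAddCommGroup E] [NormedSpace 𝕜 E] {f : 𝕜 → E} {x : 𝕜} (hf : AnalyticAt 𝕜 f x) :
    (fun y => f (x + y) - f x - y • deriv f x) =O[𝓝 0] fun y => y ^ 2 := by
  obtain ⟨p, hp⟩ := hf
  have hsum : ∀ y, p.partialSum 2 y = f x + y • deriv f x := fun y => by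
    simp [FormalMultilinearSeries.partialSum, Finset.sum_range_succ, hp.deriv, ← hp.coeff_zero 1]
  have := hp.isBigO_sub_partialSum_pow 2
  simp_rw [← norm_pow, hsum, ← sub_sub] at this
  exact this.of_norm_right

theorem Complex.tan_sub_self_isBigO : (fun z => tan z - z) =O[𝓝 0] fun z => z ^ 2 := by
  have hder : deriv tan 0 = 1 := by
    simp [(hasDerivAt_tan (by simp : cos 0 ≠ 0)).deriv]
  have han : AnalyticAt ℂ tan 0 := by
    have h := analyticAt_sin.div analyticAt_cos (by simp : cos (0 : ℂ) ≠ 0)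
    rwa [show tan = fun z => sin z / cos z from funext tan_eq_sin_div_cos]
  simpa [hder] using han.isBigO_sub_sub_smul_deriv

theorem Complex.isBigO_of_isBigO_tan {ι : Type*} {l : Filter ι} {u : ι → ℂ} {g : ι → ℝ}
    (hu : Tendsto u l (𝓝 0)) (h : (fun i => tan (u i)) =O[l] g) : u =O[l] g := by
  have hsq : (fun i => u i ^ 2) =o[l] u := by
    simpa [sq] using ((isLittleO_one_iff ℂ).2 hu).mul_isBigO (isBigO_refl u l)
  have hu_tan := ((tan_sub_self_isBigO.comp_tendsto hu).trans_isLittleO hsq).right_isBigO_add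
  simp only [Function.comp_apply, sub_add_cancel] at hu_tan
  exact hu_tan.trans h

theorem isBigO_inv_natCast_mul {𝕜 : Type*} [RCLike 𝕜] (c : 𝕜) :
    (fun n : ℕ => ((n : 𝕜) * c)⁻¹) =O[atTop] fun n => (n : ℝ)⁻¹ :=
  isBigO_iff.2 ⟨‖c‖⁻¹, .of_forall fun n => by simp [mul_comm]⟩

theorem isEquivalent_natCast_mul_add {𝕜 : Type*} [RCLike 𝕜] {c : 𝕜} (hc : c ≠ 0) {u : ℕ → 𝕜}
    (hu : u =O[atTop] fun _ => (1 : ℝ)) :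
    (fun n : ℕ => (n : 𝕜) * c + u n) ~[atTop] fun n => (n : 𝕜) * c := by
  refine IsEquivalent.refl.add_isLittleO (hu.trans_isLittleO ((isLittleO_one_left_iff ℝ).2 ?_))
  simpa using tendsto_natCast_atTop_atTop.atTop_mul_const (norm_pos_iff.2 hc)

theorem stmt_4 (ξt : ℂ) (α : ℕ → ℂ)
    (heq : ∀ n : ℕ, 1 ≤ n →
      ((n : ℂ) * Real.pi + α n) * Complex.tan (α n / 2) = -Complex.I * ξt)
    (hsmall : Tendsto α atTop (nhds 0)) :
    (fun n : ℕ => α n - (-(2 * Complex.I / Real.pi) * ξt / (n : ℂ)))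
      =O[atTop] fun n : ℕ => (1 : ℝ) / (n : ℝ) ^ 2 := by
  have hπ : (Real.pi : ℂ) ≠ 0 := ofReal_ne_zero.2 Real.pi_ne_zero
  have hα_bdd := hsmall.isBigO_one ℝ
  have hd := isEquivalent_natCast_mul_add hπ hα_bdd
  have hd_inv := hd.inv.isBigO.trans (isBigO_inv_natCast_mul _)
  have hden : ∀ᶠ n : ℕ in atTop, 1 ≤ n ∧ (n : ℂ) * Real.pi + α n ≠ 0 := by
    filter_upwards [hd.isBigO_symm.eq_zero_imp, eventually_ge_atTop 1] with n hn h1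
    exact ⟨h1, fun h => mul_ne_zero (by norm_cast; omega) hπ (hn h)⟩
  have htan : ∀ᶠ n in atTop, tan (α n / 2) = -I * ξt * ((n : ℂ) * Real.pi + α n)⁻¹ := by
    filter_upwards [hden] with n ⟨h1, hne⟩
    rw [← heq n h1]; field_simp
  have hβ_lim : Tendsto (fun n => α n / 2) atTop (𝓝 0) := by simpa using hsmall.div_const 2
  have hβ : (fun n => α n / 2) =O[atTop] fun n => (n : ℝ)⁻¹ :=
    isBigO_of_isBigO_tan hβ_lim
      ((hd_inv.const_mul_left _).congr' (htan.mono fun _ h => h.symm) .rfl)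
  have hrem := (tan_sub_self_isBigO.comp_tendsto hβ_lim).trans (hβ.pow 2)
  have hcorr : _ =O[atTop] fun n : ℕ => ((n : ℝ)⁻¹) ^ 2 :=
    ((hα_bdd.const_mul_left (2 * I * ξt)).mul hd_inv |>.mul
      (isBigO_inv_natCast_mul (Real.pi : ℂ))).congr_right fun n => by ring
  have hid : (fun n : ℕ => -2 * (tan (α n / 2) - α n / 2) +
      2 * I * ξt * α n * ((n : ℂ) * Real.pi + α n)⁻¹ * ((n : ℂ) * Real.pi)⁻¹) =ᶠ[atTop]
      fun n => α n - (-(2 * I / Real.pi) * ξt / (n : ℂ)) := by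
    filter_upwards [hden, htan] with n ⟨h1, hne⟩ ht
    have : (n : ℂ) ≠ 0 := by norm_cast; omega
    rw [ht]; field_simp; ring
  exact ((hrem.const_mul_left (-2)).add hcorr).congr' hid (.of_forall fun n => by simp [one_div])
end

section
/- Let $H$ be a separable Hilbert space, $\{\phi_j\}_{j\geq 1}$ a complete orthonormal family, and $\{\psi_j\}_{j \geq 1}$ a sequence with $\sum_{j=1}^\infty \|\psi_j - \phi_j\|^2 < \infty$. If the only sequence $(\eta_j)$ (with suitable summability making $\sum_j \eta_j \psi_j$ converge) satisfying $\sum_{j=1}^\infty \eta_j \psi_j = 0$ is the zero sequence, then $\{\psi_j\}$ is a (Schauder) basis of $H$. -/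
/-!
With `T x = ∑ ⟪φ j, x⟫ (ψ j - φ j)` we have `(1 + T) x = ∑ ⟪φ j, x⟫ ψ j`. Since the `ψ j - φ j`
are square-summable, `T` is a norm limit of finite-rank operators, hence compact. The
`ω`-independence of `ψ` makes `1 + T` injective, so by the Fredholm alternative it is surjective:
every `x` is some `(1 + T) y` and so expands along `ψ` with coefficients `⟪φ j, y⟫`, and this
expansion is unique, again by `ω`-independence.
-/

open Filter Topology
open scoped InnerProductSpace

theorem Real.summable_mul_and_tsum_mul_le_sqrt {ι : Type*} {f g : ι → ℝ}
    (hf : ∀ i, 0 ≤ f i) (hg : ∀ i, 0 ≤ g i)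
    (hf2 : Summable fun i => f i ^ 2) (hg2 : Summable fun i => g i ^ 2) :
    (Summable fun i => f i * g i) ∧
      ∑' i, f i * g i ≤ √(∑' i, f i ^ 2) * √(∑' i, g i ^ 2) := by
  have key := Real.summable_and_inner_le_Lp_mul_Lq_tsum_of_nonneg Real.HolderConjugate.two_two
    hf hg (by simpa using hf2) (by simpa using hg2)
  simpa [Real.sqrt_eq_rpow] using key

theorem IsCompactOperator.surjective_one_add_of_injective {𝕜 X : Type*}
    [NontriviallyNormedField 𝕜] [NormedAddCommGroup X] [NormedSpace 𝕜 X] [CompleteSpace X]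
    {T : X →L[𝕜] X}
    (hT : IsCompactOperator T) (hinj : Function.Injective ⇑(1 + T : X →L[𝕜] X)) :
    Function.Surjective ⇑(1 + T : X →L[𝕜] X) := by
  rcases hT.hasEigenvalue_or_mem_resolventSet (neg_ne_zero.2 (one_ne_zero (α := 𝕜))) with
    heig | hres
  · obtain ⟨y, hy⟩ := heig.exists_hasEigenvector
    refine absurd (hinj ?_) hy.2
    have hTy : T y = -y := by simpa using hy.apply_eq_smul
    simp [hTy]
  · rw [spectrum.mem_resolventSet_iff, Algebra.algebraMap_eq_smul_one, neg_smul, one_smul,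
      ← neg_add', IsUnit.neg_iff] at hres
    exact (ContinuousLinearMap.isUnit_iff_bijective.1 hres).2

theorem Orthonormal.hasSum_inner_smul_of_dense {𝕜 E ι : Type*} [RCLike 𝕜] [NormedAddCommGroup E]
    [InnerProductSpace 𝕜 E] [CompleteSpace E] {φ : ι → E} (hφ : Orthonormal 𝕜 φ)
    (hdense : Dense (Submodule.span 𝕜 (Set.range φ) : Set E)) (x : E) :
    HasSum (fun j => ⟪φ j, x⟫_𝕜 • φ j) x := by
  have hb := (HilbertBasis.mk hφ
    (Submodule.dense_iff_topologicalClosure_eq_top.1 hdense).ge).hasSum_repr x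
  simp only [HilbertBasis.repr_apply_apply] at hb
  rwa [HilbertBasis.coe_mk] at hb

section SeriesCLM

variable {𝕜 E F ι : Type*} [RCLike 𝕜] [NormedAddCommGroup E] [InnerProductSpace 𝕜 E]
  [NormedAddCommGroup F] {φ : ι → E} {c : ι → F}

theorem Orthonormal.summable_and_tsum_norm_inner_mul_norm_le (hφ : Orthonormal 𝕜 φ)
    (hc : Summable fun j => ‖c j‖ ^ 2) (x : E) :
    (Summable fun j => ‖⟪φ j, x⟫_𝕜‖ * ‖c j‖) ∧
      ∑' j, ‖⟪φ j, x⟫_𝕜‖ * ‖c j‖ ≤ √(∑' j, ‖c j‖ ^ 2) * ‖x‖ := by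
  obtain ⟨hsum, hle⟩ := Real.summable_mul_and_tsum_mul_le_sqrt (fun _ => norm_nonneg _)
    (fun _ => norm_nonneg _) (hφ.inner_products_summable x) hc
  refine ⟨hsum, hle.trans ?_⟩
  rw [mul_comm]
  gcongr
  exact (Real.sqrt_le_sqrt (hφ.tsum_inner_products_le x)).trans_eq (Real.sqrt_sq (norm_nonneg x))

variable [NormedSpace 𝕜 F] [CompleteSpace F]

theorem Orthonormal.summable_inner_smul (hφ : Orthonormal 𝕜 φ)
    (hc : Summable fun j => ‖c j‖ ^ 2) (x : E) : Summable fun j => ⟪φ j, x⟫_𝕜 • c j :=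
  .of_norm <| by simpa only [norm_smul] using (hφ.summable_and_tsum_norm_inner_mul_norm_le hc x).1

noncomputable def Orthonormal.seriesCLM (hφ : Orthonormal 𝕜 φ)
    (hc : Summable fun j => ‖c j‖ ^ 2) : E →L[𝕜] F :=
  LinearMap.mkContinuous
    { toFun := fun x => ∑' j, ⟪φ j, x⟫_𝕜 • c j
      map_add' := fun x y => by
        simp only [inner_add_right, add_smul]
        exact (hφ.summable_inner_smul hc x).tsum_add (hφ.summable_inner_smul hc y)
      map_smul' := fun a x => by
        simp only [inner_smul_right, mul_smul]
        exact (hφ.summable_inner_smul hc x).tsum_const_smul a }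
    √(∑' j, ‖c j‖ ^ 2) fun x => by
      refine (norm_tsum_le_tsum_norm ?_).trans ?_
      · simpa only [norm_smul] using (hφ.summable_and_tsum_norm_inner_mul_norm_le hc x).1
      · simpa only [norm_smul] using (hφ.summable_and_tsum_norm_inner_mul_norm_le hc x).2

theorem Orthonormal.hasSum_seriesCLM (hφ : Orthonormal 𝕜 φ)
    (hc : Summable fun j => ‖c j‖ ^ 2) (x : E) :
    HasSum (fun j => ⟪φ j, x⟫_𝕜 • c j) (hφ.seriesCLM hc x) :=
  (hφ.summable_inner_smul hc x).hasSum

theorem Orthonormal.norm_seriesCLM_le (hφ : Orthonormal 𝕜 φ)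
    (hc : Summable fun j => ‖c j‖ ^ 2) : ‖hφ.seriesCLM hc‖ ≤ √(∑' j, ‖c j‖ ^ 2) :=
  LinearMap.mkContinuous_norm_le _ (Real.sqrt_nonneg _) _

theorem Orthonormal.seriesCLM_sub_sum_eq (hφ : Orthonormal 𝕜 φ)
    (hc : Summable fun j => ‖c j‖ ^ 2) (s : Finset ι) :
    hφ.seriesCLM hc -
        ∑ j ∈ s, (ContinuousLinearMap.toSpanSingleton 𝕜 (c j)).comp (innerSL 𝕜 (φ j)) =
      (hφ.comp _ (Subtype.val_injective (p := (· ∉ s)))).seriesCLM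
        (hc.subtype (p := (· ∉ s))) := by
  ext x
  simp only [sub_apply, sum_apply, ContinuousLinearMap.comp_apply,
    innerSL_apply_apply, ContinuousLinearMap.toSpanSingleton_apply]
  rw [← (hφ.hasSum_seriesCLM hc x).tsum_eq, ← Summable.sum_add_tsum_compl (s := s)
    (hφ.summable_inner_smul hc x), add_sub_cancel_left]
  exact ((hφ.comp _ Subtype.val_injective).hasSum_seriesCLM (hc.subtype _) x).tsum_eq.symm

theorem Orthonormal.isCompactOperator_seriesCLM (hφ : Orthonormal 𝕜 φ)
    (hc : Summable fun j => ‖c j‖ ^ 2) : IsCompactOperator (hφ.seriesCLM hc) := by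
  set R : Finset ι → E →L[𝕜] F := fun s =>
    ∑ j ∈ s, (ContinuousLinearMap.toSpanSingleton 𝕜 (c j)).comp (innerSL 𝕜 (φ j))
  have hR : ∀ s, R s ∈ compactOperator (RingHom.id 𝕜) E F := fun s =>
    Submodule.sum_mem _ fun j _ =>
      (isCompactOperator_of_locallyCompactSpace_dom (innerSL 𝕜 (φ j))).clm_comp
        (ContinuousLinearMap.toSpanSingleton 𝕜 (c j))
  have hnorm : ∀ s, ‖hφ.seriesCLM hc - R s‖ ≤ √(∑' j : {j // j ∉ s}, ‖c j‖ ^ 2) := fun s => by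
    rw [hφ.seriesCLM_sub_sum_eq hc s]
    exact (hφ.comp _ Subtype.val_injective).norm_seriesCLM_le _
  have hlim : Tendsto R atTop (𝓝 (hφ.seriesCLM hc)) := by
    rw [tendsto_iff_norm_sub_tendsto_zero]
    refine squeeze_zero (fun _ => norm_nonneg _)
      (fun s => (norm_sub_rev _ _).trans_le (hnorm s)) ?_
    simpa using (tendsto_tsum_compl_atTop_zero fun j => ‖c j‖ ^ 2).sqrt
  exact isCompactOperator_of_tendsto hlim (.of_forall hR)

end SeriesCLM

theorem stmt_9_general {H : Type*} [NormedAddCommGroup H] [InnerProductSpace ℂ H]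
    [CompleteSpace H]
    (φ ψ : ℕ → H)
    (horth : Orthonormal ℂ φ)
    (hcomplete : Dense (Submodule.span ℂ (Set.range φ) : Set H))
    (hclose : Summable fun j : ℕ => ‖ψ j - φ j‖ ^ 2)
    (hindep : ∀ η : ℕ → ℂ, HasSum (fun j : ℕ => η j • ψ j) 0 → ∀ j, η j = 0) :
    ∀ x : H, ∃! η : ℕ → ℂ, HasSum (fun j : ℕ => η j • ψ j) x := by
  set T := horth.seriesCLM hclose
  have hexpansion : ∀ y, HasSum (fun j => ⟪φ j, y⟫_ℂ • ψ j) ((1 + T) y) := fun y => by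
    simpa only [← smul_add, add_sub_cancel, add_apply, one_apply_eq_self] using
      (horth.hasSum_inner_smul_of_dense hcomplete y).add (horth.hasSum_seriesCLM hclose y)
  have hinj : Function.Injective ⇑(1 + T) := by
    refine (injective_iff_map_eq_zero _).2 fun y hy => ?_
    have hcoeff := hindep _ (hy ▸ hexpansion y)
    have hzero : HasSum (fun j => ⟪φ j, y⟫_ℂ • φ j) 0 := by
      simpa only [hcoeff, zero_smul] using hasSum_zero
    exact (horth.hasSum_inner_smul_of_dense hcomplete y).unique hzero
  intro x
  have hsurj : Function.Surjective ⇑(1 + T) :=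
    (horth.isCompactOperator_seriesCLM hclose).surjective_one_add_of_injective hinj
  obtain ⟨y, rfl⟩ := hsurj x
  refine ⟨_, hexpansion y, fun η hη => funext fun j => sub_eq_zero.1 ?_⟩
  refine hindep (η - fun j => ⟪φ j, y⟫_ℂ) ?_ j
  simpa only [Pi.sub_apply, sub_smul, sub_self] using hη.sub (hexpansion y)

theorem stmt_9 {H : Type*} [NormedAddCommGroup H] [InnerProductSpace ℂ H]
    [CompleteSpace H] [SecondCountableTopology H]
    (φ ψ : ℕ → H)
    (horth : Orthonormal ℂ φ)
    (hcomplete : Dense (Submodule.span ℂ (Set.range φ) : Set H))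
    (hclose : Summable fun j : ℕ => ‖ψ j - φ j‖ ^ 2)
    (hindep : ∀ η : ℕ → ℂ, HasSum (fun j : ℕ => η j • ψ j) 0 → ∀ j, η j = 0) :
    ∀ x : H, ∃! η : ℕ → ℂ, HasSum (fun j : ℕ => η j • ψ j) x :=
  stmt_9_general φ ψ horth hcomplete hclose hindep
end

section
/- With $\psi_n$ as above and $\alpha_n = \alpha_n(\tilde\xi)$ the small solution of $(n\pi+\alpha_n)\tan(\alpha_n/2) = -i\tilde\xi$, write $\tilde\xi = \zeta + i\eta$. Then $I_n := \frac{1}{w}\int_{-w/2}^{w/2} |\psi_n(x)|^2\,dx = \frac{1}{2} + \frac{\zeta^2}{3\pi^2 n^2} + \frac{\eta}{\pi^2 n^2} + o(1/n^2)$ as $n \to \infty$. -/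
/-!
With `γ = μ_n k₀ = (nπ + α_n) / w` one has
`|ψ_n(x)|² = (cosh (2 Im γ x) + (-1)ⁿ cos (2 Re γ x)) / 2`, so
`I_n = (sinhc (Im α_n) + (-1)ⁿ sinc (nπ + Re α_n)) / 2` exactly. Since `tan z ~ z` at `0`, the
dispersion relation gives `n α_n → -2i ξ̃ / π`, i.e. `n Im α_n → -2ζ/π` and `n Re α_n → 2η/π`.
The expansion `sinhc t = 1 + t²/6 + O(t⁴)` and the identity
`(-1)ⁿ sinc (nπ + r) = sin r / (nπ + r)` then produce the two `1/n²` corrections.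
-/

open Complex Real Filter Asymptotics Topology

noncomputable def sinhc (x : ℝ) : ℝ := if x = 0 then 1 else Real.sinh x / x

lemma integral_cosh_mul_symm (c h : ℝ) :
    ∫ x in (-h)..h, Real.cosh (c * x) = 2 * h * sinhc (c * h) := by
  rcases eq_or_ne c 0 with rfl | hc
  · simp only [zero_mul, Real.cosh_zero, intervalIntegral.integral_const, sub_neg_eq_add,
      smul_eq_mul, mul_one, sinhc, ↓reduceIte]
    ring
  have hint : ∫ x in (-(c * h))..(c * h), Real.cosh x = 2 * Real.sinh (c * h) := by
    rw [intervalIntegral.integral_deriv_eq_sub' Real.sinh Real.deriv_sinh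
      (fun x _ => Real.differentiableAt_sinh) Real.continuous_cosh.continuousOn, Real.sinh_neg]
    ring
  rw [intervalIntegral.integral_comp_mul_left (fun x => Real.cosh x) hc, mul_neg, hint, smul_eq_mul]
  rcases eq_or_ne h 0 with rfl | hh
  · simp
  rw [sinhc, if_neg (mul_ne_zero hc hh)]
  field_simp

lemma integral_cos_mul_symm (c h : ℝ) :
    ∫ x in (-h)..h, Real.cos (c * x) = 2 * h * sinc (c * h) := by
  rcases eq_or_ne c 0 with rfl | hc
  · simp only [zero_mul, Real.cos_zero, intervalIntegral.integral_const, sub_neg_eq_add,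
      smul_eq_mul, mul_one, sinc_zero]
    ring
  rw [intervalIntegral.integral_comp_mul_left (fun x => Real.cos x) hc, mul_neg, integral_cos,
    Real.sin_neg, smul_eq_mul]
  rcases eq_or_ne h 0 with rfl | hh
  · simp
  rw [sinc_of_ne_zero (mul_ne_zero hc hh)]
  field_simp
  ring

lemma abs_sinh_sub_le {t : ℝ} (ht : |t| ≤ 1) : |Real.sinh t - (t + t ^ 3 / 6)| ≤ |t| ^ 5 := by
  have hpos := Real.exp_bound ht (n := 5) (by norm_num)
  have hneg := Real.exp_bound (x := -t) (by rwa [abs_neg]) (n := 5) (by norm_num)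
  simp only [Finset.sum_range_succ, Finset.sum_range_zero, Nat.factorial, abs_neg] at hpos hneg
  norm_num at hpos hneg
  have hsplit : Real.sinh t - (t + t ^ 3 / 6) =
      ((Real.exp t - (1 + t + t ^ 2 / 2 + t ^ 3 / 6 + t ^ 4 / 24))
        - (Real.exp (-t) - (1 + -t + t ^ 2 / 2 + (-t) ^ 3 / 6 + t ^ 4 / 24))) / 2 := by
    rw [Real.sinh_eq]; ring
  rw [hsplit, abs_div, abs_two, div_le_iff₀ two_pos]
  linarith [abs_sub (Real.exp t - (1 + t + t ^ 2 / 2 + t ^ 3 / 6 + t ^ 4 / 24))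
    (Real.exp (-t) - (1 + -t + t ^ 2 / 2 + (-t) ^ 3 / 6 + t ^ 4 / 24)), pow_nonneg (abs_nonneg t) 5]

lemma abs_sinhc_sub_le {t : ℝ} (ht : |t| ≤ 1) : |sinhc t - 1 - t ^ 2 / 6| ≤ |t| ^ 4 := by
  rcases eq_or_ne t 0 with rfl | h
  · simp [sinhc]
  have : sinhc t - 1 - t ^ 2 / 6 = (Real.sinh t - (t + t ^ 3 / 6)) / t := by
    rw [sinhc, if_neg h]; field_simp; ring
  rw [this, abs_div, div_le_iff₀ (abs_pos.mpr h), ← pow_succ]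
  exact abs_sinh_sub_le ht

lemma norm_exp_add_neg_one_pow_mul_exp_sq (γ : ℂ) (n : ℕ) (x : ℝ) :
    ‖Complex.exp (I * γ * x) + (-1) ^ n * Complex.exp (-(I * γ * x))‖ ^ 2
      = 2 * Real.cosh (2 * γ.im * x) + 2 * (-1) ^ n * Real.cos (2 * γ.re * x) := by
  set a := γ.re * x
  set b := γ.im * x
  have hre : (I * γ * x).re = -b := by simp [b]
  have him : (I * γ * x).im = a := by simp [a]
  have hsign : ((-1 : ℂ) ^ n) = ((-1 : ℝ) ^ n : ℝ) := by push_cast; rfl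
  have hsq : ((-1 : ℝ) ^ n) ^ 2 = 1 := by rw [← pow_mul, mul_comm, pow_mul]; norm_num
  have hexp : Real.exp b * Real.exp (-b) = 1 := by rw [← Real.exp_add]; simp
  have hpyth := Real.sin_sq_add_cos_sq a
  have hcosh : Real.cosh (2 * γ.im * x) = (Real.exp b ^ 2 + Real.exp (-b) ^ 2) / 2 := by
    rw [Real.cosh_eq, show 2 * γ.im * x = b + b by ring, neg_add, Real.exp_add, Real.exp_add]
    ring
  have hcos : Real.cos (2 * γ.re * x) = 2 * Real.cos a ^ 2 - 1 := by
    rw [mul_assoc]; exact Real.cos_two_mul a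
  rw [Complex.sq_norm, Complex.normSq_apply, hsign, hcosh, hcos]
  simp only [Complex.add_re, Complex.add_im, Complex.re_ofReal_mul, Complex.im_ofReal_mul,
    Complex.exp_re, Complex.exp_im, Complex.neg_re, Complex.neg_im, hre, him, neg_neg,
    Real.sin_neg, Real.cos_neg]
  linear_combination (Real.exp b ^ 2 * (Real.cos a ^ 2 + Real.sin a ^ 2)) * hsq
    + (Real.exp b ^ 2 + Real.exp (-b) ^ 2 - 2 * (-1) ^ n) * hpyth
    + 2 * (-1) ^ n * (Real.cos a ^ 2 - Real.sin a ^ 2) * hexp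

/-- `cavityMode (μ_n k₀) n` is the paper's `ψ_n`. -/
noncomputable def cavityMode (γ : ℂ) (n : ℕ) (x : ℝ) : ℂ :=
  (1 / 2) * (-I) ^ n * (Complex.exp (I * γ * x) + (-1) ^ n * Complex.exp (-(I * γ * x)))

lemma norm_cavityMode_sq (γ : ℂ) (n : ℕ) (x : ℝ) :
    ‖cavityMode γ n x‖ ^ 2
      = (Real.cosh (2 * γ.im * x) + (-1) ^ n * Real.cos (2 * γ.re * x)) / 2 := by
  rw [cavityMode, norm_mul, norm_mul, norm_pow, norm_neg, Complex.norm_I, one_pow, mul_one,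
    mul_pow, norm_exp_add_neg_one_pow_mul_exp_sq]
  norm_num
  ring

lemma average_norm_cavityMode_sq (γ : ℂ) (n : ℕ) {w : ℝ} (hw : w ≠ 0) :
    (1 / w) * ∫ x in (-(w / 2))..(w / 2), ‖cavityMode γ n x‖ ^ 2
      = (sinhc (γ.im * w) + (-1) ^ n * sinc (γ.re * w)) / 2 := by
  simp_rw [norm_cavityMode_sq]
  rw [intervalIntegral.integral_div, intervalIntegral.integral_add,
    intervalIntegral.integral_const_mul, integral_cosh_mul_symm, integral_cos_mul_symm]
  · field_simp
  all_goals exact Continuous.intervalIntegrable (by fun_prop) _ _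

lemma tendsto_nat_mul_of_mul_tan_half_eq {c : ℂ} {α : ℕ → ℂ} (hα : Tendsto α atTop (𝓝 0))
    (heq : ∀ᶠ n : ℕ in atTop, ((n : ℂ) * π + α n) * Complex.tan (α n / 2) = c) :
    Tendsto (fun n : ℕ => (n : ℂ) * α n) atTop (𝓝 (2 * c / π)) := by
  -- `tan z = z g(z)` with `g` continuous at `0` and `g 0 = tan' 0 = 1`
  set g := dslope Complex.tan 0
  have htan : ∀ z, Complex.tan z = z * g z := fun z => by
    simpa [Complex.tan_zero] using (sub_smul_dslope Complex.tan 0 z).symm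
  have hderiv : HasDerivAt Complex.tan 1 0 := by
    simpa using Complex.hasDerivAt_tan (by simp : Complex.cos 0 ≠ 0)
  have hg : Tendsto (fun n => g (α n / 2)) atTop (𝓝 1) := by
    have hcont : ContinuousAt g 0 := continuousAt_dslope_same.mpr hderiv.differentiableAt
    have hlim : Tendsto (fun n => α n / 2) atTop (𝓝 0) := by simpa using hα.div_const 2
    simpa [g, Function.comp_def, dslope_same, hderiv.deriv] using hcont.tendsto.comp hlim
  have hπ : (π : ℂ) ≠ 0 := Complex.ofReal_ne_zero.mpr Real.pi_ne_zero
  have hlim : Tendsto (fun n => (2 * c - α n ^ 2 * g (α n / 2)) / (π * g (α n / 2))) atTop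
      (𝓝 ((2 * c - 0 ^ 2 * 1) / (π * 1))) :=
    ((tendsto_const_nhds.sub ((hα.pow 2).mul hg)).div (tendsto_const_nhds.mul hg)
      (mul_ne_zero hπ one_ne_zero))
  rw [zero_pow two_ne_zero, zero_mul, sub_zero, mul_one] at hlim
  refine hlim.congr' ?_
  filter_upwards [heq, hg.eventually_ne one_ne_zero] with n hn hgn
  rw [htan] at hn
  field_simp
  linear_combination -2 * hn

lemma tendsto_zero_of_tendsto_nat_mul {u : ℕ → ℝ} {s : ℝ}
    (hu : Tendsto (fun n : ℕ => (n : ℝ) * u n) atTop (𝓝 s)) : Tendsto u atTop (𝓝 0) := by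
  have h := hu.mul (tendsto_one_div_atTop_nhds_zero_nat (𝕜 := ℝ))
  rw [mul_zero] at h
  refine h.congr' ?_
  filter_upwards [eventually_ne_atTop 0] with n hn
  field_simp

lemma tendsto_sq_mul_sinhc_sub_one {S : ℕ → ℝ} {s : ℝ}
    (hS : Tendsto (fun n : ℕ => (n : ℝ) * S n) atTop (𝓝 s)) :
    Tendsto (fun n : ℕ => (n : ℝ) ^ 2 * (sinhc (S n) - 1)) atTop (𝓝 (s ^ 2 / 6)) := by
  have hS0 := tendsto_zero_of_tendsto_nat_mul hS
  have hrem :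
      Tendsto (fun n : ℕ => (n : ℝ) ^ 2 * (sinhc (S n) - 1 - S n ^ 2 / 6)) atTop (𝓝 0) := by
    have hbound : Tendsto (fun n : ℕ => ((n : ℝ) * S n) ^ 2 * S n ^ 2) atTop (𝓝 0) := by
      simpa using (hS.pow 2).mul (hS0.pow 2)
    refine squeeze_zero_norm' ?_ hbound
    filter_upwards [hS0.eventually (Metric.closedBall_mem_nhds 0 one_pos)] with n hn
    rw [Real.dist_eq, sub_zero] at hn
    calc ‖(n : ℝ) ^ 2 * (sinhc (S n) - 1 - S n ^ 2 / 6)‖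
        = (n : ℝ) ^ 2 * |sinhc (S n) - 1 - S n ^ 2 / 6| := by
          rw [Real.norm_eq_abs, abs_mul, abs_of_nonneg (by positivity)]
      _ ≤ (n : ℝ) ^ 2 * |S n| ^ 4 := by gcongr; exact abs_sinhc_sub_le hn
      _ = ((n : ℝ) * S n) ^ 2 * S n ^ 2 := by
          rw [show |S n| ^ 4 = (|S n| ^ 2) ^ 2 by ring, sq_abs]; ring
  have h := hrem.add ((hS.pow 2).div_const 6)
  rw [zero_add] at h
  exact h.congr fun n => by ring

lemma tendsto_sq_mul_neg_one_pow_mul_sinc {R : ℕ → ℝ} {r : ℝ}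
    (hR : Tendsto (fun n : ℕ => (n : ℝ) * R n) atTop (𝓝 r)) :
    Tendsto (fun n : ℕ => (n : ℝ) ^ 2 * ((-1) ^ n * sinc (n * π + R n))) atTop (𝓝 (r / π)) := by
  have hR0 := tendsto_zero_of_tendsto_nat_mul hR
  have hsin : Tendsto (fun n : ℕ => (n : ℝ) * R n * sinc (R n)) atTop (𝓝 (r * 1)) := by
    simpa [sinc_zero] using hR.mul (continuous_sinc.tendsto 0 |>.comp hR0)
  have hden : Tendsto (fun n : ℕ => π + R n / n) atTop (𝓝 π) := by
    simpa using tendsto_const_nhds.add (hR0.div_atTop tendsto_natCast_atTop_atTop)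
  rw [mul_one] at hsin
  refine (hsin.div hden Real.pi_ne_zero).congr' ?_
  filter_upwards [eventually_ne_atTop 0, hden.eventually_ne Real.pi_ne_zero] with n hn hπn
  have hmul : ∀ x, x * sinc x = Real.sin x := fun x => by
    simpa [← sinc_eq_dslope] using sub_smul_dslope Real.sin 0 x
  have hsign : ((-1 : ℝ) ^ n) ^ 2 = 1 := by rw [← pow_mul, mul_comm, pow_mul]; norm_num
  have hshift := Real.sin_add_nat_mul_pi (R n) n
  rw [← hmul, ← hmul, add_comm] at hshift
  have hden_eq : π + R n / n = (n * π + R n) / n := by field_simp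
  rw [hden_eq] at hπn
  rw [Pi.div_apply, hden_eq]
  field_simp [(div_ne_zero_iff.mp hπn).1]
  linear_combination (-(-1) ^ n) * hshift - (R n * sinc (R n)) * hsign

lemma isLittleO_one_div_sq_of_tendsto {f : ℕ → ℝ}
    (hf : Tendsto (fun n : ℕ => (n : ℝ) ^ 2 * f n) atTop (𝓝 0)) :
    f =o[atTop] fun n : ℕ => (1 : ℝ) / (n : ℝ) ^ 2 := by
  refine (isLittleO_iff_tendsto' ?_).mpr
    (hf.congr fun n => by rw [one_div, div_inv_eq_mul, mul_comm])
  filter_upwards [eventually_ne_atTop 0] with n hn h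
  exact absurd h (by positivity)

lemma tendsto_nat_mul_re_im {α : ℕ → ℂ} {z : ℂ}
    (h : Tendsto (fun n : ℕ => (n : ℂ) * α n) atTop (𝓝 z)) :
    Tendsto (fun n : ℕ => (n : ℝ) * (α n).re) atTop (𝓝 z.re) ∧
      Tendsto (fun n : ℕ => (n : ℝ) * (α n).im) atTop (𝓝 z.im) := by
  constructor
  · simpa [Function.comp_def] using (Complex.continuous_re.tendsto z).comp h
  · simpa [Function.comp_def] using (Complex.continuous_im.tendsto z).comp h

theorem stmt_12 (k0 w : ℝ) (hk0 : 0 < k0) (hw : 0 < w)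
    (ξt : ℂ) (ζ η : ℝ) (hζ : ζ = ξt.re) (hη : η = ξt.im)
    (α : ℕ → ℂ)
    (heq : ∀ n : ℕ, 1 ≤ n →
      ((n : ℂ) * Real.pi + α n) * Complex.tan (α n / 2) = -Complex.I * ξt)
    (hsmall : Tendsto α atTop (nhds 0))
    (μ : ℕ → ℂ) (hμ : ∀ n : ℕ, μ n = ((n : ℂ) * Real.pi + α n) / (k0 * w))
    (ψ : ℕ → ℝ → ℂ)
    (hψ : ∀ (n : ℕ) (x : ℝ), ψ n x = (1 / 2) * (-Complex.I) ^ n *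
      (Complex.exp (Complex.I * μ n * k0 * x) +
        (-1 : ℂ) ^ n * Complex.exp (-(Complex.I * μ n * k0 * x)))) :
    (fun n : ℕ =>
        (1 / w) * (∫ x in (-(w / 2))..(w / 2), ‖ψ n x‖ ^ 2) -
          (1 / 2 + ζ ^ 2 / (3 * Real.pi ^ 2 * (n : ℝ) ^ 2) +
            η / (Real.pi ^ 2 * (n : ℝ) ^ 2)))
      =o[atTop] fun n : ℕ => (1 : ℝ) / (n : ℝ) ^ 2 := by
  have hwave : ∀ n, μ n * k0 * w = n * π + α n := fun n => by
    have hk : (k0 : ℂ) ≠ 0 := by exact_mod_cast hk0.ne'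
    have hw' : (w : ℂ) ≠ 0 := by exact_mod_cast hw.ne'
    rw [hμ]; field_simp
  have hnorm : ∀ n, (1 / w) * (∫ x in (-(w / 2))..(w / 2), ‖ψ n x‖ ^ 2)
      = (sinhc (α n).im + (-1) ^ n * sinc (n * π + (α n).re)) / 2 := fun n => by
    have hψ' : ψ n = cavityMode (μ n * k0) n := funext fun x => by
      rw [hψ, cavityMode, ← mul_assoc I]
    rw [hψ', average_norm_cavityMode_sq _ _ hw.ne', ← Complex.im_mul_ofReal,
      ← Complex.re_mul_ofReal, hwave]
    simp
  have hlim := tendsto_nat_mul_of_mul_tan_half_eq hsmall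
    ((eventually_ge_atTop 1).mono heq)
  obtain ⟨hre, him⟩ := tendsto_nat_mul_re_im hlim
  have hsum := ((tendsto_sq_mul_sinhc_sub_one him).add
    (tendsto_sq_mul_neg_one_pow_mul_sinc hre)).div_const 2
  have hz_re : (2 * (-I * ξt) / π).re = 2 * η / π := by simp [Complex.div_ofReal_re, hη]
  have hz_im : (2 * (-I * ξt) / π).im = -(2 * ζ / π) := by
    simp [Complex.div_ofReal_im, hζ, neg_div]
  have hval : (((2 * (-I * ξt) / π).im ^ 2 / 6 + (2 * (-I * ξt) / π).re / π) / 2)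
      = ζ ^ 2 / (3 * π ^ 2) + η / π ^ 2 := by
    rw [hz_re, hz_im]
    field_simp
    ring
  have hlimit := hsum.sub_const (ζ ^ 2 / (3 * π ^ 2) + η / π ^ 2)
  rw [hval, sub_self] at hlimit
  refine isLittleO_one_div_sq_of_tendsto (hlimit.congr' ?_)
  filter_upwards [eventually_ne_atTop 0] with n hn
  rw [hnorm]
  field_simp
  ring
end
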